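/- arXiv:math/0311095 — 3 statements merged into one kernel-verified Lean document; each statement's English description precedes it below -/
import Mathlib

section
/- There exists a set A of infinite binary sequences (A ⊆ ℕ → Bool) such that the Gale–Stewart game of length ω on {0,1} with payoff set A is not determined: no strategy for Player I guarantees the play lies in A, and no strategy for Player II guarantees the play lies outside A. -/
/-!
Diagonalize against all strategies. There are only continuum many strategies, while every
strategy admits continuum many plays consistent with it (the opponent can play any sequence
of moves). Well-order the strategies in order type the initial ordinal of the continuum and,
by transfinite recursion, pick for each strategy a new play consistent with it, distinct from
all plays picked before. Let `A` consist of the plays picked for Player II's strategies: then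
every strategy of Player I has a consistent play outside `A`, and every strategy of Player II
a consistent play inside `A`.
-/

/-- A play `x` is consistent with strategy `σ` for Player I (who moves at even
indices) if at every even stage `n`, `x n` is the move `σ` assigns to the
position consisting of the first `n` moves. -/
def ConsI {M : Type*} (σ : List M → M) (x : ℕ → M) : Prop :=
  ∀ n : ℕ, n % 2 = 0 → x n = σ (List.ofFn fun i : Fin n => x i)

/-- A play `x` is consistent with strategy `τ` for Player II (who moves at odd
indices). -/
def ConsII {M : Type*} (τ : List M → M) (x : ℕ → M) : Prop :=
  ∀ n : ℕ, n % 2 = 1 → x n = τ (List.ofFn fun i : Fin n => x i)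

/-- The length-ω game with move set `M` and payoff `A` is determined: either
Player I has a strategy forcing the play into `A`, or Player II has a strategy
forcing the play out of `A`. -/
def Determined {M : Type*} (A : Set (ℕ → M)) : Prop :=
  (∃ σ : List M → M, ∀ x : ℕ → M, ConsI σ x → x ∈ A) ∨
  (∃ τ : List M → M, ∀ x : ℕ → M, ConsII τ x → x ∉ A)

open Cardinal Set Function

universe u

section Plays

variable {M : Type u}

def play (σ τ : List M → M) : ℕ → M
  | n => (if n % 2 = 0 then σ else τ) (List.ofFn fun i : Fin n => play σ τ i)
  decreasing_by exact i.isLt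

lemma consI_play (σ τ : List M → M) : ConsI σ (play σ τ) := by
  intro n hn
  rw [play, if_pos hn]

lemma consII_play (σ τ : List M → M) : ConsII τ (play σ τ) := by
  intro n hn
  rw [play, if_neg (by omega)]

/-- The strategy playing `y n` in round `n`, whatever the history. -/
def blindStrategy (y : ℕ → M) : List M → M := fun l => y (l.length / 2)

lemma play_blindStrategy_odd (σ : List M → M) (y : ℕ → M) (n : ℕ) :
    play σ (blindStrategy y) (2 * n + 1) = y n := by
  rw [consII_play σ _ (2 * n + 1) (by omega), blindStrategy, List.length_ofFn]
  congr 1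
  omega

lemma play_blindStrategy_even (τ : List M → M) (y : ℕ → M) (n : ℕ) :
    play (blindStrategy y) τ (2 * n) = y n := by
  rw [consI_play _ τ (2 * n) (by omega), blindStrategy, List.length_ofFn]
  congr 1
  omega

lemma injective_play_blindStrategy_right (σ : List M → M) :
    Injective fun y : ℕ → M => play σ (blindStrategy y) := by
  intro y₁ y₂ h
  funext n
  simpa only [play_blindStrategy_odd] using congrFun h (2 * n + 1)

lemma injective_play_blindStrategy_left (τ : List M → M) :
    Injective fun y : ℕ → M => play (blindStrategy y) τ := by
  intro y₁ y₂ h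
  funext n
  simpa only [play_blindStrategy_even] using congrFun h (2 * n)

lemma mk_le_mk_consI (σ : List M → M) : #(ℕ → M) ≤ #{x | ConsI σ x} :=
  mk_le_of_injective (f := fun y => ⟨play σ (blindStrategy y), consI_play _ _⟩)
    fun _ _ h => injective_play_blindStrategy_right σ (congrArg Subtype.val h)

lemma mk_le_mk_consII (τ : List M → M) : #(ℕ → M) ≤ #{x | ConsII τ x} :=
  mk_le_of_injective (f := fun y => ⟨play (blindStrategy y) τ, consII_play _ _⟩)
    fun _ _ h => injective_play_blindStrategy_left τ (congrArg Subtype.val h)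

lemma mk_strategies [Countable M] [Nontrivial M] :
    #((List M → M) ⊕ (List M → M)) = #(ℕ → M) := by
  obtain ⟨e⟩ : Nonempty (List M ≃ ℕ) := nonempty_equiv_of_countable
  rw [mk_sum, lift_id, mk_congr (e.arrowCongr (Equiv.refl M))]
  exact add_eq_self (aleph0_le_mk _)

end Plays

lemma exists_injective_forall_mem_of_mk_Iio_lt {ι X : Type u} [LinearOrder ι] [WellFoundedLT ι]
    (H : ι → Set X) (hH : ∀ i, #(Iio i) < #(H i)) :
    ∃ c : ι → X, Injective c ∧ ∀ i, c i ∈ H i := by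
  have fresh : ∀ (i : ι) (f : Iio i → X), ∃ x ∈ H i, x ∉ range f := fun i f =>
    not_subset.1 fun hsub => (mk_le_mk_of_subset hsub |>.trans mk_range_le).not_gt (hH i)
  choose pick pick_mem pick_fresh using fresh
  let c : ι → X := IsWellFounded.fix (· < ·) fun i rec => pick i fun j => rec j j.2
  have hc : ∀ i, c i = pick i fun j => c j := IsWellFounded.fix_eq _ _
  have hc_ne : ∀ {i j}, j < i → c j ≠ c i := by
    intro i j hji h
    rw [hc i] at h
    exact pick_fresh i (fun k : Iio i => c k) ⟨⟨j, hji⟩, h⟩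
  refine ⟨c, fun i j hij => ?_, fun i => hc i ▸ pick_mem i _⟩
  rcases lt_trichotomy i j with h | h | h
  · exact (hc_ne h hij).elim
  · exact h
  · exact (hc_ne h hij.symm).elim

lemma exists_injective_forall_mem_of_mk_le {S X : Type u}
    (H : S → Set X) (hH : ∀ s, #S ≤ #(H s)) :
    ∃ c : S → X, Injective c ∧ ∀ s, c s ∈ H s := by
  obtain ⟨_, _, hS⟩ := exists_ord_eq_type_lt S
  exact exists_injective_forall_mem_of_mk_Iio_lt H fun s => (mk_Iio_lt s hS).trans_le (hH s)

theorem exists_not_determined (M : Type u) [Countable M] [Nontrivial M] :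
    ∃ A : Set (ℕ → M), ¬ Determined A := by
  let consistentPlays : (List M → M) ⊕ (List M → M) → Set (ℕ → M) :=
    Sum.elim (fun σ => {x | ConsI σ x}) (fun τ => {x | ConsII τ x})
  obtain ⟨c, hc_inj, hc_mem⟩ :
      ∃ c, Injective c ∧ ∀ s, c s ∈ consistentPlays s := by
    refine exists_injective_forall_mem_of_mk_le _ fun s => mk_strategies.trans_le ?_
    rcases s with σ | τ
    exacts [mk_le_mk_consI σ, mk_le_mk_consII τ]
  refine ⟨range (c ∘ Sum.inr), ?_⟩
  rintro (⟨σ, hσ⟩ | ⟨τ, hτ⟩)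
  · obtain ⟨τ, hτ⟩ := hσ _ (hc_mem (.inl σ))
    exact Sum.inr_ne_inl (hc_inj hτ)
  · exact hτ _ (hc_mem (.inr τ)) ⟨τ, rfl⟩

/-- There exists an undetermined payoff set for the Gale–Stewart game of
length ω on {0,1}. -/
theorem exists_undetermined_set : ∃ A : Set (ℕ → Bool), ¬ Determined A :=
  exists_not_determined Bool
end

section
/- If in the perfect-set game of length ω₁ Player II has a winning strategy S, then the payoff set X ⊆ (ω₁ → Bool) has cardinality at most 2^ℵ₀: there is an injection from X into the set of positions of the game. -/
/-- The first uncountable ordinal. -/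
noncomputable def Omega1 : Ordinal := (Cardinal.aleph 1).ord

/-- A position of the perfect-set game: a binary sequence of some countable
length (the concatenation of the moves made so far). -/
def GState := Σ β : Set.Iio Omega1, (Set.Iio β.val → Bool)

/-- The position of length `β` determined by the length-`ω₁` sequence `x`. -/
def gStateAt (x : Set.Iio Omega1 → Bool) (β : Set.Iio Omega1) : GState :=
  ⟨β, fun ξ => x ⟨ξ.val, Set.mem_Iio.mpr
      (lt_trans (Set.mem_Iio.mp ξ.2) (Set.mem_Iio.mp β.2))⟩⟩

/-- A play of the perfect-set game is recorded by the resulting length-`ω₁`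
binary sequence `x` together with the function `L` giving, for each round `α`,
the position at which Player II's bit of round `α` is placed (Player I's
countable move of round `α` occupies the positions between the earlier rounds
and `L α`).  The record is valid iff `L` is strictly increasing. -/
def ValidL (L : Set.Iio Omega1 → Set.Iio Omega1) : Prop :=
  ∀ γ α : Set.Iio Omega1, γ.val < α.val → (L γ).val < (L α).val

/-- The play `(x, L)` is consistent with the strategy `τ` for Player II
(assigning a bit to every position): at each round `α`, the bit `x (L α)` is
the one `τ` dictates at the position of length `L α`. -/
def GConsII (τ : GState → Bool) (x : Set.Iio Omega1 → Bool)
    (L : Set.Iio Omega1 → Set.Iio Omega1) : Prop :=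
  ∀ α : Set.Iio Omega1, x (L α) = τ (gStateAt x (L α))

/-!
Fix a winning strategy `τ` for Player II and `x ∈ X`. The rounds `γ` at which the bit `x γ` agrees
with `τ`'s answer at `x ↾ γ` are bounded below `ω₁`: otherwise, since countable sets of countable
ordinals are bounded, `ω₁` of them can be picked in increasing order, and Player I can play `x`
against `τ` with II's bits landing exactly there, producing a play by `τ` that I wins. Above such a
bound `β` every bit of `x` is the negation of `τ`'s answer, so `x` is recovered from `x ↾ β` by
transfinite recursion. Hence `x ↦ x ↾ β` embeds `X` into the positions, of which there are `2^ℵ₀`.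
-/

open Cardinal Ordinal Filter Set

lemma omega1_eq_omega_one : Omega1 = ω₁ := ord_aleph 1

lemma omega1_pos : 0 < Omega1 := omega1_eq_omega_one ▸ omega_pos 1

lemma succ_lt_omega1 {o : Ordinal} (ho : o < Omega1) : Order.succ o < Omega1 := by
  rw [omega1_eq_omega_one] at ho ⊢
  exact (isSuccLimit_omega 1).succ_lt ho

lemma iSup_lt_omega1 {α : Type*} [Countable α] {f : α → Ordinal} (hf : ∀ i, f i < Omega1) :
    ⨆ i, f i < Omega1 := by
  rw [omega1_eq_omega_one] at hf ⊢
  exact iSup_lt_omega_one hf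

lemma mk_Iio_le_aleph0_of_lt_omega1 {o : Ordinal} (ho : o < Omega1) : #(Iio o) ≤ ℵ₀ := by
  rw [Cardinal.mk_Iio_ordinal, lift_le_aleph0, ← lt_aleph_one_iff]
  exact lt_ord.mp ho

lemma countable_Iio_of_lt_omega1 {o : Ordinal} (ho : o < Omega1) : (Iio o).Countable :=
  le_aleph0_iff_set_countable.mp (mk_Iio_le_aleph0_of_lt_omega1 ho)

instance : Nonempty (Iio Omega1) := ⟨⟨0, omega1_pos⟩⟩

lemma exists_gt_of_countable_of_frequently {P : Iio Omega1 → Prop}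
    (hP : ∃ᶠ γ in atTop, P γ) {s : Set (Iio Omega1)} (hs : s.Countable) :
    ∃ γ, P γ ∧ ∀ δ ∈ s, δ < γ := by
  have : Countable s := hs.to_subtype
  set b := ⨆ δ : s, δ.1.1
  obtain ⟨γ, hγ, hPγ⟩ :=
    frequently_atTop.mp hP ⟨_, succ_lt_omega1 (iSup_lt_omega1 fun δ : s => δ.1.2)⟩
  refine ⟨γ, hPγ, fun δ hδ => ?_⟩
  calc δ.1 ≤ b := Ordinal.le_iSup (fun δ : s => δ.1.1) ⟨δ, hδ⟩
    _ < Order.succ b := Order.lt_succ b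
    _ ≤ γ.1 := hγ

theorem extraction_of_frequently_atTop_omega1 {ι : Type*} [Preorder ι] [WellFoundedLT ι]
    (hι : ∀ i : ι, (Iio i).Countable) {P : Iio Omega1 → Prop} (hP : ∃ᶠ γ in atTop, P γ) :
    ∃ L : ι → Iio Omega1, StrictMono L ∧ ∀ i, P (L i) := by
  choose next hnext using fun (s : Set (Iio Omega1)) (hs : s.Countable) =>
    exists_gt_of_countable_of_frequently hP hs
  have hcount (i : ι) (f : Iio i → Iio Omega1) : (range f).Countable :=
    have := (hι i).to_subtype
    countable_range f
  let L : ι → Iio Omega1 := WellFoundedLT.fix fun i L' => next _ (hcount i fun j => L' j j.2)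
  have hL (i : ι) : L i = next _ (hcount i fun j => L j) := WellFoundedLT.fix_eq _ i
  refine ⟨L, fun j i hji => ?_, fun i => ?_⟩
  · rw [hL i]
    exact (hnext _ _).2 _ ⟨⟨j, hji⟩, rfl⟩
  · rw [hL i]
    exact (hnext _ _).1

lemma countable_Iio_Iio_omega1 (i : Iio Omega1) : (Iio i).Countable :=
  (countable_Iio_of_lt_omega1 i.2).preimage Subtype.val_injective

lemma mk_arrow_bool (α : Type*) : #(α → Bool) = 2 ^ #α := by
  simp

lemma mk_gState_le : #GState ≤ 𝔠 := by
  have hlen : #(Iio Omega1) ≤ 𝔠 := by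
    rw [Cardinal.mk_Iio_ordinal, Omega1, card_ord, lift_aleph, Ordinal.lift_one]
    exact aleph_one_le_continuum
  have hfiber : ∀ β : Iio Omega1, #(Iio β.1 → Bool) ≤ 𝔠 := fun β => by
    rw [mk_arrow_bool, ← two_power_aleph0]
    exact power_le_power_left two_ne_zero (mk_Iio_le_aleph0_of_lt_omega1 β.2)
  calc #GState ≤ #(Iio Omega1) * ⨆ β : Iio Omega1, #(Iio β.1 → Bool) :=
        (mk_sigma _).trans_le (sum_le_mk_mul_iSup _)
    _ ≤ 𝔠 * 𝔠 := mul_le_mul' hlen (ciSup_le' hfiber)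
    _ = 𝔠 := mul_eq_self aleph0_le_continuum

lemma continuum_le_mk_gState : 𝔠 ≤ #GState := by
  let ω' : Iio Omega1 := ⟨ω, omega1_eq_omega_one ▸ omega0_lt_omega_one⟩
  calc 𝔠 = #(Iio ω'.1 → Bool) := by
        rw [mk_arrow_bool, Cardinal.mk_Iio_ordinal, card_omega0, lift_aleph0, two_power_aleph0]
    _ ≤ #GState := mk_le_of_injective (β := GState)
          (sigma_mk_injective (β := fun β : Iio Omega1 => Iio β.1 → Bool) (i := ω'))

lemma mk_gState : #GState = 𝔠 := le_antisymm mk_gState_le continuum_le_mk_gState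

section Game

variable {X : Set (Iio Omega1 → Bool)} {τ : GState → Bool}

lemma gStateAt_eq_gStateAt_iff {x y : Iio Omega1 → Bool} {β : Iio Omega1} :
    gStateAt x β = gStateAt y β ↔ ∀ ξ < β, x ξ = y ξ := by
  simp only [gStateAt, GState, Sigma.mk.inj_iff, heq_eq_eq, true_and, funext_iff]
  exact ⟨fun h ξ hξ => h ⟨ξ, hξ⟩, fun h ξ => h ⟨ξ.1, _⟩ ξ.2⟩

lemma eventually_ne_of_mem_of_winning (hτ : ∀ x L, ValidL L → GConsII τ x L → x ∉ X)
    {x : Iio Omega1 → Bool} (hx : x ∈ X) : ∀ᶠ γ in atTop, x γ ≠ τ (gStateAt x γ) := by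
  by_contra h
  simp only [not_eventually, not_not] at h
  obtain ⟨L, hL, hLx⟩ := extraction_of_frequently_atTop_omega1 countable_Iio_Iio_omega1 h
  exact hτ x L (fun _ _ h => hL h) hLx hx

lemma eq_of_gStateAt_eq_of_forall_ge_ne {x y : Iio Omega1 → Bool} {β : Iio Omega1}
    (hxy : gStateAt x β = gStateAt y β) (hx : ∀ γ, β ≤ γ → x γ ≠ τ (gStateAt x γ))
    (hy : ∀ γ, β ≤ γ → y γ ≠ τ (gStateAt y γ)) : x = y := by
  funext γ
  induction γ using WellFoundedLT.induction with
  | _ γ ih =>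
  rcases lt_or_ge γ β with hγ | hγ
  · exact gStateAt_eq_gStateAt_iff.mp hxy γ hγ
  · have hstate : gStateAt x γ = gStateAt y γ := gStateAt_eq_gStateAt_iff.mpr ih
    rw [Bool.eq_not.mpr (hx γ hγ), Bool.eq_not.mpr (hy γ hγ), hstate]

end Game

/-- If Player II has a winning strategy in the perfect-set game of length `ω₁`
with payoff `X ⊆ (ω₁ → Bool)`, then there is an injection of `X` into the set
of positions of the game; in particular `X` has cardinality at most `2^ℵ₀`. -/
theorem perfectSetGame_II_wins_card (X : Set (Set.Iio Omega1 → Bool))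
    (h : ∃ τ : GState → Bool, ∀ x L, ValidL L → GConsII τ x L → x ∉ X) :
    (∃ f : X → GState, Function.Injective f) ∧
    Cardinal.mk ↥X ≤ Cardinal.continuum := by
  obtain ⟨τ, hτ⟩ := h
  choose b hb using fun x : X => eventually_atTop.mp (eventually_ne_of_mem_of_winning hτ x.2)
  have hinj : Function.Injective fun x : X => gStateAt x (b x) := fun x y hxy => by
    have hβ : b x = b y := congrArg (·.1) hxy
    simp only [hβ] at hxy
    exact Subtype.ext (eq_of_gStateAt_eq_of_forall_ge_ne hxy (hβ ▸ hb x) (hb y))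
  have hcard : #X ≤ 𝔠 := (mk_le_of_injective hinj).trans mk_gState_le
  refine ⟨?_, hcard⟩
  -- the `GState` in the conclusion may live in a universe other than that of `X`
  obtain ⟨f⟩ : Nonempty (X ↪ GState) := lift_mk_le'.mp <| by
    rwa [mk_gState, lift_continuum, lift_le_continuum]
  exact ⟨f, f.injective⟩
end

section
/- Suppose every set A ⊆ (ℕ → Bool) in a pointclass Γ closed under complements is determined, where for each A ∈ Γ the game G*(A) from descriptive set theory is also in Γ. Then every A ∈ Γ is either countable or contains a perfect subset. -/
/-- A round of the *-game `G*(A)`: Player I's move (a nonempty finite binary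
sequence) followed by Player II's move (a single bit). -/
def StarRound := {l : List Bool // l ≠ []} × Bool

/-- The infinite binary sequence obtained by concatenating all rounds of a
play of the *-game (round `k` contributes Player I's sequence followed by
Player II's bit). -/
def starPlay (p : ℕ → StarRound) : ℕ → Bool := fun n =>
  (((List.range (n + 1)).map fun k => (p k).1.val ++ [(p k).2]).flatten).getD n false

/-- Consistency of a play of the *-game with a strategy for Player I, who sees
all previous rounds. -/
def StarConsI (σ : List StarRound → {l : List Bool // l ≠ []})
    (p : ℕ → StarRound) : Prop :=
  ∀ k : ℕ, (p k).1 = σ (List.ofFn fun i : Fin k => p i)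

/-- Consistency with a strategy for Player II, who sees all previous rounds
and Player I's move of the current round. -/
def StarConsII (τ : List StarRound → {l : List Bool // l ≠ []} → Bool)
    (p : ℕ → StarRound) : Prop :=
  ∀ k : ℕ, (p k).2 = τ (List.ofFn fun i : Fin k => p i) (p k).1

/-- Determinacy of the *-game `G*(A)`: Player I wins a play iff the
concatenated sequence lies in `A`. -/
def StarDetermined (A : Set (ℕ → Bool)) : Prop :=
  (∃ σ, ∀ p : ℕ → StarRound, StarConsI σ p → starPlay p ∈ A) ∨
  (∃ τ, ∀ p : ℕ → StarRound, StarConsII τ p → starPlay p ∉ A)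

/-!
If Player I wins `G*(A)` with `σ`, let Player II's bits `s : ℕ → Bool` vary: the resulting plays
give a continuous map from Cantor space into `A`, injective because II's bit of round `k` sits at a
position fixed by the earlier rounds and I's `k`-th move. Its image is an uncountable closed set,
so by Cantor–Bendixson it contains a nonempty perfect set.

If Player II wins with `τ`, every `x ∈ A` is rejected at some position `u`: every move of I that
stays on `x` is answered by `τ` with a bit leaving `x` (otherwise I could follow `x` against `τ` and
win). A point rejected at `u` is determined by `u` and its next bit, since each later bit is the
negation of `τ`'s answer to the segment of `x` before it. Hence `A` is countable.
-/

open Topology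

theorem DependsOn.continuous_of_finite {ι : Type*} {α : ι → Type*}
    [∀ i, TopologicalSpace (α i)] [∀ i, DiscreteTopology (α i)] {β : Type*}
    {f : (Π i, α i) → β} [TopologicalSpace β] {s : Set ι} (hf : DependsOn f s)
    (hs : s.Finite) : Continuous f := by
  refine ((IsLocallyConstant.iff_eventually_eq f).2 fun x => ?_).continuous
  have hx : s.pi (fun i => {x i}) ∈ 𝓝 x :=
    (isOpen_set_pi hs fun i _ => isOpen_discrete {x i}).mem_nhds (by simp)
  filter_upwards [hx] with y hy
  exact hf fun i hi => hy i hi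

instance : Uncountable (ℕ → Bool) := by
  rw [← Cardinal.aleph0_lt_mk_iff]
  simpa using Cardinal.cantor Cardinal.aleph0

namespace StarGame

section Sequences

variable {α : Type*}

def history (x : ℕ → α) (n : ℕ) : List α := List.ofFn fun i : Fin n => x i

@[simp]
theorem length_history (x : ℕ → α) (n : ℕ) : (history x n).length = n :=
  List.length_ofFn

theorem history_succ (x : ℕ → α) (n : ℕ) : history x (n + 1) = history x n ++ [x n] :=
  List.ofFn_succ_last

theorem history_prefix (x : ℕ → α) {m n : ℕ} (h : m ≤ n) : history x m <+: history x n := by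
  induction n, h using Nat.le_induction with
  | base => exact List.prefix_refl _
  | succ n _ ih => exact ih.trans (history_succ x n ▸ List.prefix_append _ _)

theorem history_congr {x y : ℕ → α} {n : ℕ} (h : ∀ i < n, x i = y i) :
    history x n = history y n := by
  simp only [history, List.ofFn_inj]
  exact funext fun i => h i i.isLt

def Extends (x : ℕ → α) (l : List α) : Prop := ∀ n (h : n < l.length), x n = l[n]

theorem extends_history (x : ℕ → α) (n : ℕ) : Extends x (history x n) := by
  intro i hi
  simp [history]

theorem Extends.prefix_history {x : ℕ → α} {l : List α} (h : Extends x l) {n : ℕ}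
    (hn : l.length ≤ n) : l <+: history x n := by
  refine List.prefix_iff_eq_take.2 (List.ext_getElem (by simpa using hn) fun i hi _ => ?_)
  simp [history, ← h i hi]

theorem Extends.append_singleton {x : ℕ → α} {l : List α} (h : Extends x l) :
    Extends x (l ++ [x l.length]) := by
  intro n hn
  rcases (Nat.lt_succ_iff.1 (by simpa using hn)).lt_or_eq with hlt | rfl
  · rw [List.getElem_append_left hlt, h n hlt]
  · simp

def seqOfHistory (step : List α → α) (k : ℕ) : α :=
  step (List.ofFn fun i : Fin k => seqOfHistory step i)
decreasing_by exact i.isLt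

theorem seqOfHistory_apply (step : List α → α) (k : ℕ) :
    seqOfHistory step k = step (history (seqOfHistory step) k) := by
  rw [seqOfHistory, history]

end Sequences

instance : Countable StarRound :=
  inferInstanceAs (Countable ({l : List Bool // l ≠ []} × Bool))

def bits (r : StarRound) : List Bool := r.1.val ++ [r.2]

def word (u : List StarRound) : List Bool := u.flatMap bits

theorem word_history_succ (p : ℕ → StarRound) (k : ℕ) :
    word (history p (k + 1)) = word (history p k) ++ (p k).1.val ++ [(p k).2] := by
  simp [word, history_succ, bits]

theorem le_length_word_history (p : ℕ → StarRound) (k : ℕ) :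
    k ≤ (word (history p k)).length := by
  induction k with
  | zero => simp
  | succ k ih =>
    simp only [word_history_succ, List.length_append, List.length_singleton]
    omega

theorem starPlay_eq_getD (p : ℕ → StarRound) (n : ℕ) :
    starPlay p n = (word (history p (n + 1))).getD n false := by
  have : (List.range (n + 1)).map p = history p (n + 1) :=
    List.ext_getElem (by simp) fun i _ _ => by
      simp only [history, List.getElem_map, List.getElem_range, List.getElem_ofFn]
  rw [starPlay, word, List.flatMap_def, ← this, List.map_map]
  rfl

theorem extends_starPlay (p : ℕ → StarRound) (k : ℕ) :
    Extends (starPlay p) (word (history p k)) := by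
  intro n hn
  have hn' : n < (word (history p (n + 1))).length :=
    (le_length_word_history p (n + 1)).trans_lt' n.lt_succ_self
  rw [starPlay_eq_getD, List.getD_eq_getElem _ _ hn']
  rcases le_total k (n + 1) with h | h
  · exact ((history_prefix p h).flatMap bits |>.getElem hn).symm
  · exact (history_prefix p h).flatMap bits |>.getElem hn'

theorem starPlay_eq_of_forall_extends {p : ℕ → StarRound} {x : ℕ → Bool}
    (h : ∀ k, Extends x (word (history p k))) : starPlay p = x := by
  funext n
  have hn := (le_length_word_history p (n + 1)).trans_lt' n.lt_succ_self
  rw [extends_starPlay p (n + 1) n hn, h (n + 1) n hn]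

theorem starPlay_reply (p : ℕ → StarRound) (k : ℕ) :
    starPlay p ((word (history p k)).length + (p k).1.val.length) = (p k).2 := by
  have hlt : (word (history p k)).length + (p k).1.val.length <
      (word (history p (k + 1))).length := by
    simp [word_history_succ]
  rw [extends_starPlay p (k + 1) _ hlt]
  simp [word_history_succ]

section PlayerI

variable (σ : List StarRound → {l : List Bool // l ≠ []})

def playOfReplies (s : ℕ → Bool) : ℕ → StarRound :=
  seqOfHistory (α := StarRound) fun u => (σ u, s u.length)

def outcomeOfReplies (s : ℕ → Bool) : ℕ → Bool := starPlay (playOfReplies σ s)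

theorem playOfReplies_apply (s : ℕ → Bool) (k : ℕ) :
    playOfReplies σ s k = (σ (history (playOfReplies σ s) k), s k) := by
  unfold playOfReplies
  exact (seqOfHistory_apply _ k).trans (by rw [length_history])

theorem playOfReplies_snd (s : ℕ → Bool) (k : ℕ) : (playOfReplies σ s k).2 = s k := by
  rw [playOfReplies_apply]

theorem starConsI_playOfReplies (s : ℕ → Bool) : StarConsI σ (playOfReplies σ s) :=
  fun k => by rw [playOfReplies_apply]; rfl

theorem history_playOfReplies_congr {s t : ℕ → Bool} {k : ℕ} (h : ∀ i < k, s i = t i) :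
    history (playOfReplies σ s) k = history (playOfReplies σ t) k := by
  induction k with
  | zero => rfl
  | succ k ih =>
    have ih := ih fun i hi => h i (hi.trans k.lt_succ_self)
    rw [history_succ, history_succ, ih, playOfReplies_apply, playOfReplies_apply, ih,
      h k k.lt_succ_self]

theorem outcomeOfReplies_injective : Function.Injective (outcomeOfReplies σ) := by
  intro s t hst
  by_contra hne
  set k := PiNat.firstDiff s t
  have hhist : history (playOfReplies σ s) k = history (playOfReplies σ t) k :=
    history_playOfReplies_congr σ fun i hi => PiNat.apply_eq_of_lt_firstDiff hi
  have hmove : (playOfReplies σ s k).1 = (playOfReplies σ t k).1 := by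
    rw [playOfReplies_apply, playOfReplies_apply, hhist]
  have hs := starPlay_reply (playOfReplies σ s) k
  have ht := starPlay_reply (playOfReplies σ t) k
  rw [hhist, hmove, playOfReplies_snd] at hs
  rw [playOfReplies_snd] at ht
  exact PiNat.apply_firstDiff_ne hne (hs.symm.trans ((congrFun hst _).trans ht))

theorem continuous_outcomeOfReplies : Continuous (outcomeOfReplies σ) :=
  continuous_pi fun n => DependsOn.continuous_of_finite
    (fun s t h => by
      simp only [outcomeOfReplies, starPlay_eq_getD,
        history_playOfReplies_congr σ fun i hi => h i hi])
    (Set.finite_Iio (n + 1))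

theorem exists_perfect_subset_of_winning_I {A : Set (ℕ → Bool)}
    (hσ : ∀ p, StarConsI σ p → starPlay p ∈ A) :
    ∃ C ⊆ A, C.Nonempty ∧ Perfect C := by
  have hclosed := (isCompact_range (continuous_outcomeOfReplies σ)).isClosed
  have huncount : ¬ (Set.range (outcomeOfReplies σ)).Countable := fun h =>
    Set.not_countable_univ (by simpa using h.preimage (outcomeOfReplies_injective σ))
  obtain ⟨C, hperf, hne, hC⟩ :=
    exists_perfect_nonempty_of_isClosed_of_not_countable hclosed huncount
  refine ⟨C, ?_, hne, hperf⟩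
  rintro _ hx
  obtain ⟨s, rfl⟩ := hC hx
  exact hσ _ (starConsI_playOfReplies σ s)

end PlayerI

section PlayerII

variable (τ : List StarRound → {l : List Bool // l ≠ []} → Bool)

def Rejects (u : List StarRound) (x : ℕ → Bool) : Prop :=
  Extends x (word u) ∧ ∀ l : {l : List Bool // l ≠ []},
    Extends x (word u ++ l.val) → τ u l ≠ x ((word u).length + l.val.length)

theorem exists_starConsII_starPlay_eq {x : ℕ → Bool} (hx : ∀ u, ¬ Rejects τ u x) :
    ∃ p, StarConsII τ p ∧ starPlay p = x := by
  have hmove : ∀ u, ∃ l : {l : List Bool // l ≠ []}, Extends x (word u) →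
      Extends x (word u ++ l.val) ∧ τ u l = x ((word u).length + l.val.length) := by
    intro u
    by_cases hu : Extends x (word u)
    · simpa [Rejects, hu] using hx u
    · exact ⟨⟨[false], List.cons_ne_nil _ _⟩, fun h => absurd h hu⟩
  choose l hl using hmove
  set p := seqOfHistory (α := StarRound) fun u => (l u, τ u (l u))
  have hp : ∀ k, p k = (l (history p k), τ (history p k) (l (history p k))) :=
    seqOfHistory_apply _
  have hext : ∀ k, Extends x (word (history p k)) := by
    intro k
    induction k with
    | zero => intro n hn; simp [word, history] at hn
    | succ k ih =>
      obtain ⟨hlk, hτk⟩ := hl _ ih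
      rw [word_history_succ, hp k, hτk, ← List.length_append]
      exact hlk.append_singleton
  exact ⟨p, fun k => by rw [hp k]; rfl, starPlay_eq_of_forall_extends hext⟩

theorem eq_of_rejects {u : List StarRound} {x y : ℕ → Bool} (hx : Rejects τ u x)
    (hy : Rejects τ u y) (hxy : x (word u).length = y (word u).length) : x = y := by
  funext n
  induction n using Nat.strong_induction_on with
  | _ n ih =>
    rcases lt_trichotomy n (word u).length with hn | rfl | hn
    · rw [hx.1 n hn, hy.1 n hn]
    · exact hxy
    · obtain ⟨l, hl⟩ := hx.1.prefix_history hn.le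
      have hlen : (word u).length + l.length = n := by simpa using congrArg List.length hl
      have hne : l ≠ [] := by rintro rfl; simp at hlen; omega
      have hxl : Extends x (word u ++ l) := hl ▸ extends_history x n
      have hyl : Extends y (word u ++ l) := hl ▸ history_congr ih ▸ extends_history y n
      have h₁ := hx.2 ⟨l, hne⟩ hxl
      have h₂ := hy.2 ⟨l, hne⟩ hyl
      rw [hlen] at h₁ h₂
      exact (Bool.eq_not.2 h₁.symm).trans (Bool.eq_not.2 h₂.symm).symm

theorem countable_of_winning_II {A : Set (ℕ → Bool)}
    (hτ : ∀ p, StarConsII τ p → starPlay p ∉ A) : A.Countable := by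
  have hcover : A ⊆ ⋃ ub : List StarRound × Bool,
      {x | Rejects τ ub.1 x ∧ x (word ub.1).length = ub.2} := by
    intro x hxA
    by_contra hx
    obtain ⟨p, hp, rfl⟩ := exists_starConsII_starPlay_eq τ fun u hu =>
      hx (Set.mem_iUnion.2 ⟨(u, x (word u).length), hu, rfl⟩)
    exact hτ p hp hxA
  refine (Set.countable_iUnion fun ub => Set.Subsingleton.countable ?_).mono hcover
  exact fun x hx y hy => eq_of_rejects τ hx.1 hy.1 (hx.2.trans hy.2.symm)

end PlayerII

end StarGame

theorem perfect_set_property_of_star_determinacy_general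
    (Γ : Set (Set (ℕ → Bool)))
    (hstar : ∀ A ∈ Γ, StarDetermined A) :
    ∀ A ∈ Γ, A.Countable ∨ ∃ C : Set (ℕ → Bool), C ⊆ A ∧ C.Nonempty ∧ Perfect C := by
  intro A hA
  rcases hstar A hA with ⟨σ, hσ⟩ | ⟨τ, hτ⟩
  · exact Or.inr (StarGame.exists_perfect_subset_of_winning_I σ hσ)
  · exact Or.inl (StarGame.countable_of_winning_II τ hτ)

/-- Let `Γ` be a pointclass closed under complements all of whose members are
determined, such that for each `A ∈ Γ` the *-game `G*(A)` is also determined.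
Then every `A ∈ Γ` has the perfect set property: `A` is countable or contains
a nonempty perfect subset. -/
theorem perfect_set_property_of_star_determinacy
    (Γ : Set (Set (ℕ → Bool)))
    (hcompl : ∀ A ∈ Γ, Aᶜ ∈ Γ)
    (hdet : ∀ A ∈ Γ, Determined A)
    (hstar : ∀ A ∈ Γ, StarDetermined A) :
    ∀ A ∈ Γ, A.Countable ∨ ∃ C : Set (ℕ → Bool), C ⊆ A ∧ C.Nonempty ∧ Perfect C :=
  perfect_set_property_of_star_determinacy_general Γ hstar
end
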